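/- arXiv:2107.12974 — 2 statements merged into one kernel-verified Lean document; each statement's English description precedes it below -/
import Mathlib

section
/- Suppose a, b, s are positive integers with b ≥ 2 and a ≤ (2^s + 1)(b + s). Then there exists a 2^{−b+1}-almost strongly 2-universal family of functions from {0,1}^a to {0,1}^b indexed by keys of length y = 3b + 2s bits, i.e., a family {f_κ}_{κ∈{0,1}^y} such that (i) for every m and t, the fraction of keys with f_κ(m) = t equals 2^{−b}, and (ii) for distinct m₁, m₂ and any t₁, t₂, the fraction of keys κ with f_κ(m₂) = t₂ for which also f_κ(m₁) = t₁ is at most 2^{−b+1}. -/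
/-! Messages are encoded injectively as polynomials of degree at most `2 ^ s` over
`K = GF(2^(b+s))`, and the key `((k₀, k₁), k₂)` tags `p` with `π (k₁ * p(k₀)) + k₂`, where
`π : K → GF(2)^b` is a surjective linear map. The shift `k₂` makes every tag equally likely.
For two messages `p₁ ≠ p₂` the two tag equations force `π (k₁ * (p₁ - p₂)(k₀)) = t₁ - t₂`:
for the at most `2 ^ s` roots `k₀` of `p₁ - p₂` this costs nothing, and otherwise it cuts out
a fibre of a surjective linear map in `k₁`. Hence the collision probability is at most
`2 ^ s / 2 ^ (b + s) + 2 ^ (-b) = 2 ^ (1 - b)`. -/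

open Finset Function Polynomial

attribute [local instance] Classical.propDecidable

section Universal

variable {ι M T : Type*} [Fintype ι] [Fintype T]

def IsAlmostStronglyUniversal (f : ι → M → T) (ε : ℝ) : Prop :=
  (∀ m t, (#{κ | f κ m = t} : ℝ) / Fintype.card ι = (Fintype.card T : ℝ)⁻¹) ∧
    ∀ m₁ m₂ t₁ t₂, m₁ ≠ m₂ →
      (#{κ | f κ m₁ = t₁ ∧ f κ m₂ = t₂} : ℝ) / #{κ | f κ m₂ = t₂} ≤ ε

theorem IsAlmostStronglyUniversal.comp {ι' M' T' : Type*} [Fintype ι'] [Fintype T']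
    {f : ι → M → T} {ε : ℝ} (hf : IsAlmostStronglyUniversal f ε) (eKey : ι' ≃ ι) (eTag : T ≃ T')
    {g : M' → M} (hg : Injective g) :
    IsAlmostStronglyUniversal (fun κ m => eTag (f (eKey κ) (g m))) ε := by
  obtain ⟨hmarg, hcoll⟩ := hf
  refine ⟨fun m t => ?_, fun m₁ m₂ t₁ t₂ hm => ?_⟩
  · rw [Fintype.card_congr eKey, ← Fintype.card_congr eTag]
    convert hmarg (g m) (eTag.symm t) using 3
    exact card_equiv eKey (by simp [eTag.eq_symm_apply])
  · convert hcoll (g m₁) (g m₂) (eTag.symm t₁) (eTag.symm t₂) (hg.ne hm) using 3 <;>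
      exact card_equiv eKey (by simp [eTag.eq_symm_apply])

end Universal

section Counting

variable {X V : Type*} [Fintype X] [AddCommGroup V] [Fintype V]

theorem card_filter_add_eq (φ : X → V) (t : V) :
    #{p : X × V | φ p.1 + p.2 = t} = Fintype.card X := by
  have hinj : Injective fun x => (x, t - φ x) := fun x y h => (Prod.ext_iff.1 h).1
  rw [← card_univ, ← card_image_of_injective univ hinj]
  congr 1
  ext ⟨x, v⟩
  simp [eq_sub_iff_add_eq', eq_comm]

theorem card_filter_add_eq_and_add_eq (φ₁ φ₂ : X → V) (t₁ t₂ : V) :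
    #{p : X × V | φ₁ p.1 + p.2 = t₁ ∧ φ₂ p.1 + p.2 = t₂} = #{x | φ₁ x - φ₂ x = t₁ - t₂} := by
  refine card_nbij' Prod.fst (fun x => (x, t₂ - φ₂ x)) ?_ ?_ ?_ ?_
  · rintro ⟨x, v⟩ hp
    simp only [coe_filter, mem_univ, true_and, Set.mem_ofPred_eq] at hp ⊢
    rw [← hp.1, ← hp.2]
    abel
  · intro x hx
    simp only [coe_filter, mem_univ, true_and, Set.mem_ofPred_eq] at hx ⊢
    refine ⟨?_, add_sub_cancel _ _⟩
    rw [add_sub_left_comm, hx, add_sub_cancel]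
  · rintro ⟨x, v⟩ hp
    simp only [coe_filter, mem_univ, true_and, Set.mem_ofPred_eq] at hp
    simp [← hp.2]
  · intro x _
    rfl

end Counting

theorem AddMonoidHom.card_fiber_mul_card {G H : Type*} [AddGroup G] [Fintype G] [AddGroup H]
    [Fintype H] (f : G →+ H) (hf : Surjective f) (y : H) :
    #{x | f x = y} * Fintype.card H = Fintype.card G := by
  calc #{x | f x = y} * Fintype.card H = ∑ z, #{x | f x = z} := by
        rw [sum_congr rfl fun z _ => card_fiber_eq_of_mem_range f (hf z) (hf y), sum_const,
          card_univ, smul_eq_mul, mul_comm]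
    _ = Fintype.card G := (card_eq_sum_card_fiberwise (by simp)).symm

theorem Polynomial.card_filter_eval_eq_zero_le {K : Type*} [Field K] [Fintype K] {p : K[X]}
    (hp : p ≠ 0) : #{x | p.eval x = 0} ≤ p.natDegree :=
  card_le_degree_of_subset_roots fun _ hx => (mem_roots hp).2 (mem_filter.1 hx).2

theorem exists_linearMap_surjective_of_le_finrank {F E : Type*} [Field F] [AddCommGroup E]
    [Module F E] [FiniteDimensional F E] {b : ℕ} (hb : b ≤ Module.finrank F E) :
    ∃ f : E →ₗ[F] (Fin b → F), Surjective f :=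
  ⟨LinearMap.funLeft F F (Fin.castLE hb) ∘ₗ (Module.finBasis F E).equivFun.toLinearMap,
    (LinearMap.funLeft_surjective_of_injective F F _ (Fin.castLE_injective hb)).comp
      (Module.finBasis F E).equivFun.surjective⟩

section ReedSolomon

variable {K V : Type*} [Field K] [Fintype K] [AddCommGroup V] [Fintype V]

theorem card_filter_map_mul_eq_le (π : K →+ V) (hπ : Surjective π) (d : K → K) (u : V) :
    (#{x : K × K | π (x.2 * d x.1) = u} : ℝ) ≤
      #{k | d k = 0} * Fintype.card K + Fintype.card K * Fintype.card K / Fintype.card V := by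
  have hfiber : ∀ k, d k ≠ 0 →
      (#{c : K | π (c * d k) = u} : ℝ) = Fintype.card K / Fintype.card V := by
    intro k hk
    have hsurj : Surjective (π.comp (AddMonoidHom.mulRight (d k))) := fun v =>
      let ⟨c, hc⟩ := hπ v
      ⟨c * (d k)⁻¹, by simp [hk, hc]⟩
    rw [eq_div_iff (by positivity)]
    exact_mod_cast (π.comp (AddMonoidHom.mulRight (d k))).card_fiber_mul_card hsurj u
  calc (#{x : K × K | π (x.2 * d x.1) = u} : ℝ)
      = ∑ k, (#{c : K | π (c * d k) = u} : ℝ) := by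
        simp only [natCast_card_filter, Fintype.sum_prod_type]
    _ ≤ ∑ k, ((if d k = 0 then 1 else 0) * (Fintype.card K : ℝ) +
          Fintype.card K / Fintype.card V) := by
        gcongr with k
        split_ifs with hk
        · have hle : (#{c : K | π (c * d k) = u} : ℝ) ≤ Fintype.card K := by
            exact_mod_cast (card_filter_le _ _).trans_eq card_univ
          have hnonneg : (0 : ℝ) ≤ Fintype.card K / Fintype.card V := by positivity
          linarith
        · simp [hfiber k hk]
    _ = _ := by
        rw [sum_add_distrib, ← sum_mul, ← natCast_card_filter, sum_const, card_univ, nsmul_eq_mul,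
          mul_div_assoc]

/-- The Reed–Solomon hash `p ↦ p(k₀)` composed with the strongly universal family
`x ↦ π (k₁ * x) + k₂`, keyed by `((k₀, k₁), k₂)`. -/
def reedSolomonTag (π : K →+ V) (N : ℕ) (κ : (K × K) × V) (p : K[X]_N) : V :=
  π (κ.1.2 * (p : K[X]).eval κ.1.1) + κ.2

theorem isAlmostStronglyUniversal_reedSolomonTag (π : K →+ V) (hπ : Surjective π) (d : ℕ) :
    IsAlmostStronglyUniversal (reedSolomonTag π (d + 1))
      (d / Fintype.card K + (Fintype.card V : ℝ)⁻¹) := by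
  have hmarg : ∀ p t, #{κ | reedSolomonTag π (d + 1) κ p = t} = Fintype.card K * Fintype.card K :=
    fun p t => (card_filter_add_eq (fun x : K × K => π (x.2 * (p : K[X]).eval x.1)) t).trans
      (Fintype.card_prod K K)
  refine ⟨fun p t => ?_, fun p₁ p₂ t₁ t₂ hp => ?_⟩
  · rw [hmarg, Fintype.card_prod, Fintype.card_prod]
    push_cast
    field_simp
  set q : K[X] := (p₁ : K[X]) - p₂
  have hq : q ≠ 0 := sub_ne_zero.2 (Subtype.coe_injective.ne hp)
  have hdeg : q.natDegree ≤ d := Nat.lt_succ_iff.1 <|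
    (natDegree_lt_iff_degree_lt hq).2 (mem_degreeLT.1 (Submodule.sub_mem _ p₁.2 p₂.2))
  have hroots : (#{k | q.eval k = 0} : ℝ) ≤ d := by
    exact_mod_cast (card_filter_eval_eq_zero_le hq).trans hdeg
  have hcoll := card_filter_map_mul_eq_le π hπ (fun k => q.eval k) (t₁ - t₂)
  have hnum : #{κ | reedSolomonTag π (d + 1) κ p₁ = t₁ ∧ reedSolomonTag π (d + 1) κ p₂ = t₂} =
      #{x : K × K | π (x.2 * q.eval x.1) = t₁ - t₂} := by
    refine (card_filter_add_eq_and_add_eq (fun x : K × K => π (x.2 * (p₁ : K[X]).eval x.1))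
      (fun x => π (x.2 * (p₂ : K[X]).eval x.1)) t₁ t₂).trans ?_
    simp only [q, eval_sub, mul_sub, map_sub]
  have hK : (0 : ℝ) < Fintype.card K := by exact_mod_cast Fintype.card_pos
  rw [hmarg, hnum, div_le_iff₀ (by positivity)]
  calc _ ≤ (#{k | q.eval k = 0} : ℝ) * Fintype.card K +
        Fintype.card K * Fintype.card K / Fintype.card V := hcoll
    _ ≤ d * Fintype.card K + Fintype.card K * Fintype.card K / Fintype.card V := by gcongr
    _ = _ := by
      push_cast
      field_simp

end ReedSolomon

theorem exists_isAlmostStronglyUniversal_bits {a b s : ℕ} (hn : b + s ≠ 0)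
    (hlen : a ≤ (2 ^ s + 1) * (b + s)) :
    ∃ f : (Fin (3 * b + 2 * s) → Bool) → (Fin a → Bool) → (Fin b → Bool),
      IsAlmostStronglyUniversal f (2 * ((2 : ℝ) ^ b)⁻¹) := by
  have : Fact (Nat.Prime 2) := ⟨Nat.prime_two⟩
  let K := GaloisField 2 (b + s)
  let : Fintype K := Fintype.ofFinite K
  have hK : Fintype.card K = 2 ^ (b + s) := by
    rw [Fintype.card_eq_nat_card]
    exact GaloisField.card 2 _ hn
  obtain ⟨π, hπ⟩ := exists_linearMap_surjective_of_le_finrank (F := ZMod 2) (E := K) (b := b)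
    (by rw [GaloisField.finrank 2 hn]; omega)
  have hmsg : Fintype.card (Fin a → Bool) ≤ Fintype.card (Fin (2 ^ s + 1) → K) := by
    simp only [Fintype.card_fun, Fintype.card_bool, Fintype.card_fin, hK, ← pow_mul]
    exact Nat.pow_le_pow_right two_pos (by rw [mul_comm]; exact hlen)
  let g := (Function.Embedding.nonempty_of_card_le hmsg).some.trans
    (degreeLTEquiv K (2 ^ s + 1)).symm.toEquiv.toEmbedding
  let eKey : (Fin (3 * b + 2 * s) → Bool) ≃ (K × K) × (Fin b → ZMod 2) :=
    Fintype.equivOfCardEq (by simp [hK, ← pow_add]; ring_nf)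
  let eTag : (Fin b → ZMod 2) ≃ (Fin b → Bool) := Fintype.equivOfCardEq (by simp)
  have hε : ((2 ^ s : ℕ) : ℝ) / Fintype.card K + (Fintype.card (Fin b → ZMod 2) : ℝ)⁻¹ =
      2 * ((2 : ℝ) ^ b)⁻¹ := by
    rw [hK, Fintype.card_fun, ZMod.card, Fintype.card_fin]
    push_cast
    rw [pow_add]
    field_simp
    ring
  exact ⟨_, hε ▸ (isAlmostStronglyUniversal_reedSolomonTag π.toAddMonoidHom hπ (2 ^ s)).comp
    eKey eTag g.injective⟩

theorem stmt12_general (a b s : ℕ) (hs : 0 < s)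
    (hlen : a ≤ (2 ^ s + 1) * (b + s)) :
    ∃ f : (Fin (3 * b + 2 * s) → Bool) → (Fin a → Bool) → (Fin b → Bool),
      (∀ (m : Fin a → Bool) (t : Fin b → Bool),
        ((univ.filter fun κ => f κ m = t).card : ℝ) /
            Fintype.card (Fin (3 * b + 2 * s) → Bool)
          = ((2 : ℝ) ^ b)⁻¹) ∧
      (∀ (m₁ m₂ : Fin a → Bool) (t₁ t₂ : Fin b → Bool), m₁ ≠ m₂ →
        ((univ.filter fun κ => f κ m₁ = t₁ ∧ f κ m₂ = t₂).card : ℝ) /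
            ((univ.filter fun κ => f κ m₂ = t₂).card)
          ≤ 2 * ((2 : ℝ) ^ b)⁻¹) := by
  obtain ⟨f, hmarg, hcoll⟩ := exists_isAlmostStronglyUniversal_bits (by omega) hlen
  -- `convert` only has to reconcile the decidability instances of the filters.
  refine ⟨f, fun m t => ?_, fun m₁ m₂ t₁ t₂ hm => by convert hcoll m₁ m₂ t₁ t₂ hm⟩
  rw [show (2 : ℝ) ^ b = Fintype.card (Fin b → Bool) by simp]
  convert hmarg m t

/-- Existence of a 2^{-b+1}-AS2U family from {0,1}^a to {0,1}^b with keys of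
length y = 3b + 2s bits, whenever a ≤ (2^s + 1)(b + s). -/
theorem stmt12 (a b s : ℕ) (ha : 0 < a) (hb : 2 ≤ b) (hs : 0 < s)
    (hlen : a ≤ (2 ^ s + 1) * (b + s)) :
    ∃ f : (Fin (3 * b + 2 * s) → Bool) → (Fin a → Bool) → (Fin b → Bool),
      (∀ (m : Fin a → Bool) (t : Fin b → Bool),
        ((univ.filter fun κ => f κ m = t).card : ℝ) /
            Fintype.card (Fin (3 * b + 2 * s) → Bool)
          = ((2 : ℝ) ^ b)⁻¹) ∧
      (∀ (m₁ m₂ : Fin a → Bool) (t₁ t₂ : Fin b → Bool), m₁ ≠ m₂ →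
        ((univ.filter fun κ => f κ m₁ = t₁ ∧ f κ m₂ = t₂).card : ℝ) /
            ((univ.filter fun κ => f κ m₂ = t₂).card)
          ≤ 2 * ((2 : ℝ) ^ b)⁻¹) :=
  stmt12_general a b s hs hlen
end

section
/- Let N ≥ 4, ω < N/3, and suppose a malicious coalition C of size at most ω (not containing honest recipients i, j) attacks transferability: honest recipient P_i accepts at level l ≥ 1 while honest P_j rejects at level l − 1, under thresholds T_l = ω + lω. If the coalition forces its tests to T_{i,c,l} = 1 and T_{j,c,l−1} = 0 for all c ∈ C, then acceptance by P_i and rejection by P_j jointly imply Σ_{h∉C}(T_{i,h,l} − T_{j,h,l−1}) > ω − |C| ≥ 0; in particular there exists at least one honest index h ∉ C with T_{i,h,l} = 1 and T_{j,h,l−1} = 0. -/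
open Finset

/-! The thresholds of consecutive levels differ by `ω`, so the two totals differ by more than `ω`.
Each forced index of `C` accounts for exactly `1` of that gap, leaving a positive sum over the
honest indices; a positive term `T_{i,h,l} - T_{j,h,l-1}` of `0/1` tests means `(1, 0)`. -/

theorem lt_sub_of_lt_add_mul_of_le_add_pred_mul {ω l a b : ℕ} (hl : 1 ≤ l)
    (ha : ω + l * ω < a) (hb : b ≤ ω + (l - 1) * ω) : (ω : ℤ) < a - b := by
  obtain ⟨k, rfl⟩ := Nat.exists_eq_add_of_le' hl
  simp only [Nat.add_sub_cancel] at hb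
  linarith

theorem Finset.sum_sdiff_eq_sum_sub_card_of_eq_one {ι : Type*} [DecidableEq ι]
    {s C : Finset ι} (hC : C ⊆ s) {f : ι → ℤ} (hf : ∀ c ∈ C, f c = 1) :
    ∑ h ∈ s \ C, f h = ∑ h ∈ s, f h - #C := by
  rw [sum_sdiff_eq_sub hC, sum_congr rfl hf, sum_const, nsmul_one]

theorem stmt16_general (N ω l : ℕ)
    (hl : 1 ≤ l)
    (C : Finset (Fin N)) (hC : C.card ≤ ω)
    (Ti Tj : Fin N → ℕ)   -- tests T_{i,·,l} and T_{j,·,l-1}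
    (hT : ∀ h, Ti h ≤ 1 ∧ Tj h ≤ 1)
    (hforce : ∀ c ∈ C, Ti c = 1 ∧ Tj c = 0)
    (hacc : ω + l * ω < ∑ h, Ti h)
    (hrej : ∑ h, Tj h ≤ ω + (l - 1) * ω) :
    ((ω : ℤ) - C.card < ∑ h ∈ univ \ C, ((Ti h : ℤ) - (Tj h : ℤ)) ∧
      0 ≤ (ω : ℤ) - C.card) ∧
    ∃ h, h ∉ C ∧ Ti h = 1 ∧ Tj h = 0 := by
  have hgap : (ω : ℤ) < ∑ h, ((Ti h : ℤ) - (Tj h : ℤ)) := by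
    simpa only [sum_sub_distrib, Nat.cast_sum] using
      lt_sub_of_lt_add_mul_of_le_add_pred_mul hl hacc hrej
  have hhonest : (ω : ℤ) - C.card < ∑ h ∈ univ \ C, ((Ti h : ℤ) - (Tj h : ℤ)) := by
    rw [sum_sdiff_eq_sum_sub_card_of_eq_one (subset_univ C) fun c hc => by
      simp [hforce c hc]]
    linarith
  have hslack : 0 ≤ (ω : ℤ) - C.card := by omega
  refine ⟨⟨hhonest, hslack⟩, ?_⟩
  have hpos : ∑ _h ∈ univ \ C, (0 : ℤ) < ∑ h ∈ univ \ C, ((Ti h : ℤ) - (Tj h : ℤ)) := by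
    simpa only [sum_const_zero] using hslack.trans_lt hhonest
  obtain ⟨h, hh, hlt⟩ := exists_lt_of_sum_lt hpos
  obtain ⟨hTi, hTj⟩ := hT h
  exact ⟨h, (mem_sdiff.1 hh).2, by omega, by omega⟩

/-- Non-transferability structure: if a coalition C (|C| ≤ ω) forces its tests to
T_{i,c,l} = 1 and T_{j,c,l-1} = 0, then acceptance by P_i at level l and rejection
by P_j at level l-1 imply Σ_{h∉C}(T_{i,h,l} - T_{j,h,l-1}) > ω - |C| ≥ 0; in
particular some honest h ∉ C has T_{i,h,l} = 1 and T_{j,h,l-1} = 0. -/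
theorem stmt16 (N ω l : ℕ) (hN : 4 ≤ N) (hω : 1 ≤ ω) (hω3 : 3 * ω < N)
    (hl : 1 ≤ l)
    (C : Finset (Fin N)) (hC : C.card ≤ ω)
    (Ti Tj : Fin N → ℕ)   -- tests T_{i,·,l} and T_{j,·,l-1}
    (hT : ∀ h, Ti h ≤ 1 ∧ Tj h ≤ 1)
    (hforce : ∀ c ∈ C, Ti c = 1 ∧ Tj c = 0)
    (hacc : ω + l * ω < ∑ h, Ti h)
    (hrej : ∑ h, Tj h ≤ ω + (l - 1) * ω) :
    ((ω : ℤ) - C.card < ∑ h ∈ univ \ C, ((Ti h : ℤ) - (Tj h : ℤ)) ∧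
      0 ≤ (ω : ℤ) - C.card) ∧
    ∃ h, h ∉ C ∧ Ti h = 1 ∧ Tj h = 0 :=
  stmt16_general N ω l hl C hC Ti Tj hT hforce hacc hrej
end
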